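/- The left counit ε_l of the Connes–Moscovici algebra satisfies the left bialgebroid character property: ε_l(h h') = ε_l(h · s_l(ε_l(h'))) = ε_l(h · t_l(ε_l(h'))) for all h, h' ∈ H. -/
import Mathlib


open TensorProduct

noncomputable section

/-- `(id ⊗ Δ) ∘ Δ : Q → Q ⊗ (Q ⊗ Q)`, producing the Sweedler legs
`q₍₁₎ ⊗ q₍₂₎ ⊗ q₍₃₎` of the iterated coproduct. -/
def comul2 (Q : Type*) [Ring Q] [HopfAlgebra ℂ Q] :
    Q →ₗ[ℂ] Q ⊗[ℂ] (Q ⊗[ℂ] Q) :=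
  (LinearMap.lTensor Q (Coalgebra.comul (R := ℂ))).comp (Coalgebra.comul (R := ℂ))

/-- The right-hand side `Σ a (q₍₁₎·a') ⊗ q₍₂₎ q' ⊗ (q₍₃₎·b') b` of the
Connes–Moscovici product formula on `H = A ⊗ Q ⊗ A`. -/
def cmMulRHS {Q A : Type*} [Ring Q] [HopfAlgebra ℂ Q] [Ring A] [Algebra ℂ A]
    (act : Q →ₗ[ℂ] A →ₗ[ℂ] A) (a : A) (q : Q) (b : A) (a' : A) (q' : Q) (b' : A) :
    A ⊗[ℂ] (Q ⊗[ℂ] A) :=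
  TensorProduct.map ((LinearMap.mulLeft ℂ a).comp (act.flip a'))
    (TensorProduct.map (LinearMap.mulRight ℂ q')
      ((LinearMap.mulRight ℂ b).comp (act.flip b')))
    (comul2 Q q)

/-- Key computation: `ε_l` of the Connes–Moscovici product of two pure tensors is
`ε(q') • (a (q · (a' b')) b)`. -/
lemma cm_key {Q A : Type*} [Ring Q] [HopfAlgebra ℂ Q] [Ring A] [Algebra ℂ A]
    (act : Q →ₗ[ℂ] A →ₗ[ℂ] A)
    (hact_alg_mul : ∀ (q : Q) (a a' : A),
      act q (a * a') =
        LinearMap.mul' ℂ A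
          (TensorProduct.map (act.flip a) (act.flip a') (Coalgebra.comul (R := ℂ) q)))
    (εl : (A ⊗[ℂ] (Q ⊗[ℂ] A)) →ₗ[ℂ] A)
    (hεl : ∀ (a : A) (q : Q) (b : A),
      εl (a ⊗ₜ[ℂ] (q ⊗ₜ[ℂ] b)) = Coalgebra.counit (R := ℂ) q • (a * b))
    (a : A) (q : Q) (b a' : A) (q' : Q) (b' : A) :
    εl (cmMulRHS act a q b a' q' b') =
      Coalgebra.counit (R := ℂ) q' • (a * act q (a' * b') * b) := by
  set f : Q →ₗ[ℂ] A := (LinearMap.mulLeft ℂ a).comp (act.flip a') with hf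
  set g : Q →ₗ[ℂ] Q := LinearMap.mulRight ℂ q' with hg
  set k : Q →ₗ[ℂ] A := (LinearMap.mulRight ℂ b).comp (act.flip b') with hk
  set M : Q ⊗[ℂ] Q →ₗ[ℂ] A :=
    ((LinearMap.mulRight ℂ b).comp (LinearMap.mulLeft ℂ a)).comp
      ((LinearMap.mul' ℂ A).comp (TensorProduct.map (act.flip a') (act.flip b'))) with hM
  set g1 : Q ⊗[ℂ] Q →ₗ[ℂ] Q :=
    (TensorProduct.lid ℂ Q).toLinearMap.comp
      (LinearMap.rTensor Q (Coalgebra.counit (R := ℂ))) with hg1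
  have H : εl ∘ₗ TensorProduct.map f (TensorProduct.map g k)
      = Coalgebra.counit (R := ℂ) q' • (M ∘ₗ LinearMap.lTensor Q g1) := by
    ext x y z
    simp [hεl, hM, hg1, hf, hg, hk, mul_assoc, smul_smul, mul_comm, mul_smul_comm,
      smul_mul_assoc]
  have h2 : g1 ∘ₗ (Coalgebra.comul (R := ℂ) (A := Q)) = LinearMap.id := by
    ext x
    simp [hg1]
  have h3 : (LinearMap.lTensor Q g1) ((comul2 Q) q) = Coalgebra.comul (R := ℂ) q := by
    rw [comul2, LinearMap.comp_apply, ← LinearMap.comp_apply (LinearMap.lTensor Q g1),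
      ← LinearMap.lTensor_comp, h2, LinearMap.lTensor_id, LinearMap.id_apply]
  have := congr($(H) (comul2 Q q))
  simp only [LinearMap.comp_apply, LinearMap.smul_apply] at this
  rw [cmMulRHS, this, h3, hact_alg_mul]
  simp [hM, mul_assoc]

/-- The left counit `ε_l(a ⊗ q ⊗ b) = a ε(q) b` of the Connes–Moscovici algebra
satisfies the left bialgebroid character property
`ε_l(h h') = ε_l(h s_l(ε_l h')) = ε_l(h t_l(ε_l h'))`, where
`s_l(x) = x ⊗ 1 ⊗ 1` and `t_l(x) = 1 ⊗ 1 ⊗ x`. -/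
theorem cm_left_counit_character
    {Q A : Type*} [Ring Q] [HopfAlgebra ℂ Q] [Ring A] [Algebra ℂ A]
    (act : Q →ₗ[ℂ] A →ₗ[ℂ] A)
    (hact_one : ∀ a : A, act 1 a = a)
    (hact_mul : ∀ (q q' : Q) (a : A), act (q * q') a = act q (act q' a))
    (hact_alg_mul : ∀ (q : Q) (a a' : A),
      act q (a * a') =
        LinearMap.mul' ℂ A
          (TensorProduct.map (act.flip a) (act.flip a') (Coalgebra.comul (R := ℂ) q)))
    (hact_alg_one : ∀ q : Q, act q 1 = Coalgebra.counit (R := ℂ) q • (1 : A))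
    -- the Connes–Moscovici multiplication on `H`:
    (m : (A ⊗[ℂ] (Q ⊗[ℂ] A)) →ₗ[ℂ] (A ⊗[ℂ] (Q ⊗[ℂ] A)) →ₗ[ℂ] (A ⊗[ℂ] (Q ⊗[ℂ] A)))
    (hm : ∀ (a : A) (q : Q) (b a' : A) (q' : Q) (b' : A),
      m (a ⊗ₜ[ℂ] (q ⊗ₜ[ℂ] b)) (a' ⊗ₜ[ℂ] (q' ⊗ₜ[ℂ] b')) = cmMulRHS act a q b a' q' b')
    -- the left counit `ε_l : H → A`:
    (εl : (A ⊗[ℂ] (Q ⊗[ℂ] A)) →ₗ[ℂ] A)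
    (hεl : ∀ (a : A) (q : Q) (b : A),
      εl (a ⊗ₜ[ℂ] (q ⊗ₜ[ℂ] b)) = Coalgebra.counit (R := ℂ) q • (a * b)) :
    ∀ h h' : A ⊗[ℂ] (Q ⊗[ℂ] A),
      εl (m h h') = εl (m h ((εl h') ⊗ₜ[ℂ] ((1 : Q) ⊗ₜ[ℂ] (1 : A)))) ∧
      εl (m h h') = εl (m h ((1 : A) ⊗ₜ[ℂ] ((1 : Q) ⊗ₜ[ℂ] (εl h')))) := by
  intro h h'
  have key := cm_key act hact_alg_mul εl hεl
  induction h' using TensorProduct.induction_on with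
  | zero => simp
  | add x y hx hy =>
      exact ⟨by simp [map_add, add_tmul, hx.1, hy.1],
        by simp [map_add, tmul_add, hx.2, hy.2]⟩
  | tmul a' w' =>
      induction w' using TensorProduct.induction_on with
      | zero => simp
      | add x y hx hy =>
          exact ⟨by simp [tmul_add, map_add, add_tmul, hx.1, hy.1],
            by simp [tmul_add, map_add, hx.2, hy.2]⟩
      | tmul q' b' =>
          induction h using TensorProduct.induction_on with
          | zero => simp
          | add x y hx hy =>
              exact ⟨by simp [map_add, LinearMap.add_apply, hx.1, hy.1],
                by simp [map_add, LinearMap.add_apply, hx.2, hy.2]⟩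
          | tmul a w =>
              induction w using TensorProduct.induction_on with
              | zero => simp [tmul_zero]
              | add x y hx hy =>
                  exact ⟨by simp [tmul_add, map_add, LinearMap.add_apply, hx.1, hy.1],
                    by simp [tmul_add, map_add, LinearMap.add_apply, hx.2, hy.2]⟩
              | tmul q b =>
                  constructor
                  · rw [hm, key, hεl a' q' b']
                    simp [← smul_tmul', map_smul, hm, key]
                  · rw [hm, key, hεl a' q' b']
                    simp [tmul_smul, map_smul, hm, key]
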